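/- Let n ≥ 1, L, L' ≥ 0 and M ≥ 0 be integers, and let P ∈ ℂ[w₁,…,wₙ,v₁,…,vₙ] be bihomogeneous of bidegree (L,L') and harmonic (ΔP = 0). Then on the open set U = {(w,v) ∈ ℂⁿ × ℂⁿ : X(w,v) ≠ 0} one has −X·Δ( X^{−M}·P ) = M·(L + L' + n − M − 1) · X^{−M}·P. In particular, with M = L + F for an integer F ≥ 0, the eigenvalue equals (L+F)·(L' − F + n − 1), which is the paper's energy E₋(n,L,L',F) of the lower components of the supersymmetric doublets in the fermion-number-F sector. -/

import Mathlib

open MvPolynomial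

noncomputable section

/-- Weight function giving the degree in the `w`-variables (indexed by `Sum.inl`). -/
def wWt (n : ℕ) : (Fin n ⊕ Fin n) → ℕ := Sum.elim (fun _ => 1) (fun _ => 0)

/-- Weight function giving the degree in the `v`-variables (indexed by `Sum.inr`). -/
def vWt (n : ℕ) : (Fin n ⊕ Fin n) → ℕ := Sum.elim (fun _ => 0) (fun _ => 1)

/-- The complex Laplacian `Δ = ∑_α ∂²/∂w_α∂v_α` on polynomials. -/
def polyLap (n : ℕ) (P : MvPolynomial (Fin n ⊕ Fin n) ℂ) : MvPolynomial (Fin n ⊕ Fin n) ℂ :=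
  ∑ α : Fin n, pderiv (Sum.inl α) (pderiv (Sum.inr α) P)

/-- `X(w,v) = ∑_α w_α v_α`. -/
def XvalC (n : ℕ) (p : (Fin n → ℂ) × (Fin n → ℂ)) : ℂ := ∑ α : Fin n, p.1 α * p.2 α

/-- Evaluation of a polynomial at the point `(w, v)`. -/
def evalWV (n : ℕ) (P : MvPolynomial (Fin n ⊕ Fin n) ℂ)
    (p : (Fin n → ℂ) × (Fin n → ℂ)) : ℂ :=
  MvPolynomial.eval (Sum.elim p.1 p.2) P

/-- The operator `−X·Δ` acting on functions on `ℂⁿ × ℂⁿ` (the bosonic part of the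
supersymmetric Hamiltonian). -/
def Hop (n : ℕ) (f : (Fin n → ℂ) × (Fin n → ℂ) → ℂ)
    (p : (Fin n → ℂ) × (Fin n → ℂ)) : ℂ :=
  -(XvalC n p) * ∑ α : Fin n,
    fderiv ℂ (fun q => fderiv ℂ f q (Pi.single α 1, 0)) p (0, Pi.single α 1)


/-! Conjugating `∂ᵢ` by `X ^ z` keeps polynomials polynomial:
`X ^ (1 - z) ∂ᵢ (X ^ z Q) = X ∂ᵢ Q + z (∂ᵢ X) Q`. Hence `Δ (X ^ z P) = X ^ (z - 2) R` for an
explicit polynomial `R`, and with `∂_{w_α} X = v_α`, `∂_{v_α} X = w_α`, harmonicity and Euler's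
identities `∑ w_α ∂_{w_α} P = L P`, `∑ v_α ∂_{v_α} P = L' P` one finds
`R = z (L + L' + n + z - 1) X P`. Taking `z = -M` gives the eigenvalue. -/

namespace MvPolynomial

theorem pderiv_pderiv_comm {R σ : Type*} [CommRing R] (i j : σ) (f : MvPolynomial σ R) :
    pderiv i (pderiv j f) = pderiv j (pderiv i f) := by
  classical
  have h : ⁅pderiv i, pderiv j⁆ = (0 : Derivation R (MvPolynomial σ R) (MvPolynomial σ R)) :=
    derivation_ext fun k => by
      rw [Derivation.commutator_apply]
      simp [pderiv_X, Pi.single_apply, apply_ite]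
  have := congr($h f)
  rwa [Derivation.commutator_apply, Derivation.zero_apply, sub_eq_zero] at this

/-- `A ^ (1 - z) * ∂ᵢ (A ^ z * Q)`, computed formally. -/
def twistedPDeriv {R σ : Type*} [CommRing R] (A : MvPolynomial σ R) (z : ℤ) (i : σ)
    (Q : MvPolynomial σ R) : MvPolynomial σ R :=
  A * pderiv i Q + z * pderiv i A * Q

variable {𝕜 ι : Type*} [NontriviallyNormedField 𝕜] [Fintype ι]

theorem hasFDerivAt_eval (Q : MvPolynomial ι 𝕜) (x : ι → 𝕜) :
    HasFDerivAt (fun y => eval y Q)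
      (∑ i, eval x (pderiv i Q) • (ContinuousLinearMap.proj i : (ι → 𝕜) →L[𝕜] 𝕜)) x := by
  classical
  induction Q using MvPolynomial.induction_on with
  | C a =>
    simp only [eval_C]
    refine (hasFDerivAt_const a x).congr_fderiv ?_
    ext y
    simp
  | add p q hp hq =>
    simp only [map_add]
    refine (hp.add hq).congr_fderiv ?_
    ext y
    simp [add_mul, Finset.sum_add_distrib]
  | mul_X p i hp =>
    simp only [map_mul, eval_X]
    refine (hp.fun_mul (ContinuousLinearMap.proj (R := 𝕜) (φ := fun _ => 𝕜) i).hasFDerivAt)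
      |>.congr_fderiv ?_
    ext y
    simp [pderiv_X, Pi.single_apply, Finset.mul_sum, add_mul, apply_ite, ite_mul,
      Finset.sum_add_distrib, mul_assoc]

variable [DecidableEq ι] {A : MvPolynomial ι 𝕜} {x : ι → 𝕜}

theorem fderiv_zpow_mul_eval_apply_single (hx : eval x A ≠ 0) (z : ℤ) (Q : MvPolynomial ι 𝕜)
    (i : ι) :
    fderiv 𝕜 (fun y => eval y A ^ z * eval y Q) x (Pi.single i 1)
      = eval x A ^ (z - 1) * eval x (twistedPDeriv A z i Q) := by
  have hAz : HasFDerivAt (fun y => eval y A ^ z) _ x :=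
    (hasDerivAt_zpow z _ (Or.inl hx)).comp_hasFDerivAt x (hasFDerivAt_eval A x)
  rw [(hAz.fun_mul (hasFDerivAt_eval Q x)).fderiv]
  simp only [zpow_sub_one₀ hx, add_apply, smul_apply, sum_apply, ContinuousLinearMap.proj_apply,
    Pi.single_apply, smul_eq_mul, mul_ite, mul_one, mul_zero, Finset.sum_ite_eq', Finset.mem_univ,
    if_true, twistedPDeriv, map_add, map_mul, map_intCast]
  field_simp

theorem fderiv_fderiv_zpow_mul_eval_apply_single (hx : eval x A ≠ 0) (z : ℤ)
    (Q : MvPolynomial ι 𝕜) (i j : ι) :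
    fderiv 𝕜 (fun y => fderiv 𝕜 (fun y => eval y A ^ z * eval y Q) y (Pi.single i 1)) x
        (Pi.single j 1)
      = eval x A ^ (z - 2) * eval x (twistedPDeriv A (z - 1) j (twistedPDeriv A z i Q)) := by
  have hnear : ∀ᶠ y in nhds x, eval y A ≠ 0 :=
    (hasFDerivAt_eval A x).continuousAt.eventually_ne hx
  rw [Filter.EventuallyEq.fderiv_eq (hnear.mono fun y hy =>
    fderiv_zpow_mul_eval_apply_single hy z Q i), fderiv_zpow_mul_eval_apply_single hx]
  ring_nf

end MvPolynomial

section

variable {R : Type*} [CommRing R] (n : ℕ)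

def xPoly : MvPolynomial (Fin n ⊕ Fin n) R :=
  ∑ α : Fin n, X (Sum.inl α) * X (Sum.inr α)

variable {n}

theorem pderiv_inl_xPoly (α : Fin n) :
    pderiv (Sum.inl α) (xPoly n : MvPolynomial _ R) = X (Sum.inr α) := by
  simp [xPoly, pderiv_X, Pi.single_apply]

theorem pderiv_inr_xPoly (α : Fin n) :
    pderiv (Sum.inr α) (xPoly n : MvPolynomial _ R) = X (Sum.inl α) := by
  simp [xPoly, pderiv_X, Pi.single_apply]

theorem twistedPDeriv_inr_twistedPDeriv_inl (z : ℤ) (α : Fin n)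
    (P : MvPolynomial (Fin n ⊕ Fin n) R) :
    twistedPDeriv (xPoly n) (z - 1) (Sum.inr α) (twistedPDeriv (xPoly n) z (Sum.inl α) P)
      = xPoly n ^ 2 * pderiv (Sum.inl α) (pderiv (Sum.inr α) P)
        + (z : MvPolynomial (Fin n ⊕ Fin n) R) * xPoly n * (X (Sum.inl α) * pderiv (Sum.inl α) P
          + X (Sum.inr α) * pderiv (Sum.inr α) P + P)
        + ((z * (z - 1) : ℤ) : MvPolynomial (Fin n ⊕ Fin n) R) * (X (Sum.inl α) * X (Sum.inr α))
          * P := by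
  simp only [twistedPDeriv, map_add, Derivation.leibniz, smul_eq_mul, pderiv_inl_xPoly,
    pderiv_inr_xPoly, pderiv_X, Pi.single_eq_same, Derivation.map_intCast,
    pderiv_pderiv_comm (Sum.inr α) (Sum.inl α), mul_one, mul_zero, add_zero]
  push_cast
  ring

variable {L L' : ℕ} {P : MvPolynomial (Fin n ⊕ Fin n) R}

theorem sum_X_inl_mul_pderiv_inl (h : P.IsWeightedHomogeneous (wWt n) L) :
    ∑ α, X (Sum.inl α) * pderiv (Sum.inl α) P = L • P := by
  simpa [Fintype.sum_sum_type, wWt] using h.sum_weight_X_mul_pderiv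

theorem sum_X_inr_mul_pderiv_inr (h : P.IsWeightedHomogeneous (vWt n) L') :
    ∑ α, X (Sum.inr α) * pderiv (Sum.inr α) P = L' • P := by
  simpa [Fintype.sum_sum_type, vWt] using h.sum_weight_X_mul_pderiv

theorem sum_twistedPDeriv_inr_twistedPDeriv_inl (hw : P.IsWeightedHomogeneous (wWt n) L)
    (hv : P.IsWeightedHomogeneous (vWt n) L') (z : ℤ) :
    ∑ α, twistedPDeriv (xPoly n) (z - 1) (Sum.inr α) (twistedPDeriv (xPoly n) z (Sum.inl α) P)
      = xPoly n ^ 2 * ∑ α, pderiv (Sum.inl α) (pderiv (Sum.inr α) P)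
        + ((z * (L + L' + n + z - 1) : ℤ) : MvPolynomial _ R) * xPoly n * P := by
  simp only [twistedPDeriv_inr_twistedPDeriv_inl, Finset.sum_add_distrib, ← Finset.mul_sum,
    ← Finset.sum_mul, sum_X_inl_mul_pderiv_inl hw, sum_X_inr_mul_pderiv_inr hv]
  simp only [xPoly, nsmul_eq_mul, Finset.sum_const, Finset.card_univ, Fintype.card_fin]
  push_cast
  ring

end

theorem eval_xPoly (n : ℕ) (p : (Fin n → ℂ) × (Fin n → ℂ)) :
    eval (Sum.elim p.1 p.2) (xPoly n) = XvalC n p := by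
  simp [xPoly, XvalC]

theorem hop_comp_sumElim (n : ℕ) (g : (Fin n ⊕ Fin n → ℂ) → ℂ) (p : (Fin n → ℂ) × (Fin n → ℂ)) :
    Hop n (fun q => g (Sum.elim q.1 q.2)) p = -XvalC n p * ∑ α,
      fderiv ℂ (fun y => fderiv ℂ g y (Pi.single (Sum.inl α) 1)) (Sum.elim p.1 p.2)
        (Pi.single (Sum.inr α) 1) := by
  let e := (ContinuousLinearEquiv.sumPiEquivProdPi ℂ (Fin n) (Fin n) fun _ => ℂ).symm
  have he : ∀ q, e q = Sum.elim q.1 q.2 := fun q => rfl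
  have hinl : ∀ α, e (Pi.single α 1, 0) = Pi.single (Sum.inl α) 1 := by
    intro α; ext (β | β) <;> simp [he, Pi.single_apply]
  have hinr : ∀ α, e (0, Pi.single α 1) = Pi.single (Sum.inr α) 1 := by
    intro α; ext (β | β) <;> simp [he, Pi.single_apply]
  change Hop n (g ∘ e) p = _
  simp only [Hop, e.comp_right_fderiv, ContinuousLinearMap.comp_apply,
    ContinuousLinearEquiv.coe_coe, hinl]
  congr 1
  refine Finset.sum_congr rfl fun α _ => ?_
  rw [show (fun q => fderiv ℂ g (e q) (Pi.single (Sum.inl α) 1))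
      = (fun y => fderiv ℂ g y (Pi.single (Sum.inl α) 1)) ∘ e from rfl,
    e.comp_right_fderiv, ContinuousLinearMap.comp_apply, ContinuousLinearEquiv.coe_coe, hinr, he]

theorem stmt11_general (n L L' M : ℕ) (P : MvPolynomial (Fin n ⊕ Fin n) ℂ)
    (hw : P.IsWeightedHomogeneous (wWt n) L)
    (hv : P.IsWeightedHomogeneous (vWt n) L')
    (hharm : polyLap n P = 0) :
    (∀ p : (Fin n → ℂ) × (Fin n → ℂ), XvalC n p ≠ 0 →
        Hop n (fun q => (XvalC n q) ^ (-(M : ℤ)) * evalWV n P q) p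
          = ((M : ℂ) * ((L : ℂ) + (L' : ℂ) + (n : ℂ) - (M : ℂ) - 1)) *
            ((XvalC n p) ^ (-(M : ℤ)) * evalWV n P p))
    ∧ ∀ F : ℕ, M = L + F →
        (M : ℂ) * ((L : ℂ) + (L' : ℂ) + (n : ℂ) - (M : ℂ) - 1)
          = ((L : ℂ) + (F : ℂ)) * ((L' : ℂ) - (F : ℂ) + (n : ℂ) - 1) := by
  refine ⟨fun p hp => ?_, fun F hF => by subst hF; push_cast; ring⟩
  have hx : eval (Sum.elim p.1 p.2) (xPoly n) ≠ 0 := by rwa [eval_xPoly]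
  simp_rw [← eval_xPoly, evalWV]
  rw [hop_comp_sumElim n (fun y => eval y (xPoly n) ^ (-(M : ℤ)) * eval y P)]
  simp_rw [fderiv_fderiv_zpow_mul_eval_apply_single hx, ← Finset.mul_sum, ← map_sum,
    sum_twistedPDeriv_inr_twistedPDeriv_inl hw hv]
  rw [show ∑ α, pderiv (Sum.inl α) (pderiv (Sum.inr α) P) = polyLap n P from rfl, hharm]
  simp only [map_mul, map_intCast, mul_zero, zero_add, eval_xPoly]
  rw [zpow_sub₀ hp, zpow_neg, zpow_natCast]
  field_simp
  push_cast
  ring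

/-- For `P` bihomogeneous of bidegree `(L,L')` and harmonic, one has
`−X·Δ(X^{−M}·P) = M·(L+L'+n−M−1)·X^{−M}·P` on `{X ≠ 0}`; in particular for
`M = L + F` the eigenvalue equals `(L+F)(L'−F+n−1)`, the paper's `E₋(n,L,L',F)`. -/
theorem stmt11 (n L L' M : ℕ) (hn : 1 ≤ n) (P : MvPolynomial (Fin n ⊕ Fin n) ℂ)
    (hw : P.IsWeightedHomogeneous (wWt n) L)
    (hv : P.IsWeightedHomogeneous (vWt n) L')
    (hharm : polyLap n P = 0) :
    (∀ p : (Fin n → ℂ) × (Fin n → ℂ), XvalC n p ≠ 0 →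
        Hop n (fun q => (XvalC n q) ^ (-(M : ℤ)) * evalWV n P q) p
          = ((M : ℂ) * ((L : ℂ) + (L' : ℂ) + (n : ℂ) - (M : ℂ) - 1)) *
            ((XvalC n p) ^ (-(M : ℤ)) * evalWV n P p))
    ∧ ∀ F : ℕ, M = L + F →
        (M : ℂ) * ((L : ℂ) + (L' : ℂ) + (n : ℂ) - (M : ℂ) - 1)
          = ((L : ℂ) + (F : ℂ)) * ((L' : ℂ) - (F : ℂ) + (n : ℂ) - 1) :=
  stmt11_general n L L' M P hw hv hharm
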